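/- arXiv:1405.5798 — 2 statements merged into one kernel-verified Lean document; each statement's English description precedes it below -/
import Mathlib

section
/- For every ℓ ∈ ℕ with ℓ ≥ 1, the simplex S = conv{0, ℓ·e₁, e₂, …, e_m} in ℝ^m satisfies |S ∩ ℤ^m| = ℓ + m and m! · vol(S) = ℓ; in particular Blichfeldt's bound |S ∩ ℤ^m| ≤ m! · vol(S) + m is attained with equality. -/
open MeasureTheory Set
open scoped ENNReal

lemma volume_cornerSimplex : ∀ (n : ℕ) (c : ℝ), 0 ≤ c →
    volume {x : Fin n → ℝ | (∀ i, 0 ≤ x i) ∧ ∑ i, x i ≤ c}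
      = ENNReal.ofReal (c ^ n / n.factorial) := by
  intro n
  induction n with
  | zero =>
    intro c hc
    have h : {x : Fin 0 → ℝ | (∀ i, 0 ≤ x i) ∧ ∑ i, x i ≤ c} = Set.univ := by
      ext x
      simp only [Set.mem_setOf_eq, Set.mem_univ, iff_true]
      exact ⟨fun i => i.elim0, by simpa using hc⟩
    rw [h]
    simp [MeasureTheory.volume_pi, Measure.pi_univ]
  | succ n ih =>
    intro c hc
    have mp := MeasureTheory.volume_preserving_piFinSuccAbove (fun _ : Fin (n+1) => ℝ) 0
    set A : Set (ℝ × (Fin n → ℝ)) :=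
      {p | (0 ≤ p.1 ∧ ∀ i, 0 ≤ p.2 i) ∧ p.1 + ∑ i, p.2 i ≤ c} with hA
    have hAc : IsClosed A := by
      have h1 : IsClosed {p : ℝ × (Fin n → ℝ) | 0 ≤ p.1} :=
        isClosed_le continuous_const continuous_fst
      have h2 : IsClosed {p : ℝ × (Fin n → ℝ) | ∀ i, 0 ≤ p.2 i} := by
        have h : {p : ℝ × (Fin n → ℝ) | ∀ i, 0 ≤ p.2 i} = ⋂ i, {p | 0 ≤ p.2 i} := by
          ext p; simp
        rw [h]
        exact isClosed_iInter fun i =>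
          isClosed_le continuous_const ((continuous_apply i).comp continuous_snd)
      have h3 : IsClosed {p : ℝ × (Fin n → ℝ) | p.1 + ∑ i, p.2 i ≤ c} := by
        refine isClosed_le ?_ continuous_const
        exact continuous_fst.add
          (continuous_finset_sum _ fun i _ => (continuous_apply i).comp continuous_snd)
      have h : A = ({p : ℝ × (Fin n → ℝ) | 0 ≤ p.1} ∩ {p | ∀ i, 0 ≤ p.2 i}) ∩
          {p | p.1 + ∑ i, p.2 i ≤ c} := rfl
      rw [h]; exact (h1.inter h2).inter h3
    have hAm : MeasurableSet A := hAc.measurableSet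
    have hpre : {x : Fin (n+1) → ℝ | (∀ i, 0 ≤ x i) ∧ ∑ i, x i ≤ c}
        = (MeasurableEquiv.piFinSuccAbove (fun _ : Fin (n+1) => ℝ) 0) ⁻¹' A := by
      ext x
      simp only [Set.mem_setOf_eq, Set.mem_preimage, hA,
        MeasurableEquiv.piFinSuccAbove, MeasurableEquiv.coe_mk, MeasurableEquiv.piFinSuccAbove_apply]
      constructor
      · rintro ⟨h0, hsum⟩
        refine ⟨⟨h0 0, fun i => h0 _⟩, ?_⟩
        rw [Fin.sum_univ_succAbove x 0] at hsum
        exact hsum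
      · rintro ⟨⟨h0, hrest⟩, hsum⟩
        refine ⟨fun i => ?_, ?_⟩
        · rcases Fin.eq_zero_or_eq_succ i with rfl | ⟨j, rfl⟩
          · exact h0
          · have := hrest j
            simpa [Fin.removeNth, Fin.zero_succAbove, Fin.tail] using this
        · rw [Fin.sum_univ_succAbove x 0]
          exact hsum
    rw [hpre, mp.measure_preimage hAm.nullMeasurableSet]
    rw [show (volume : Measure (ℝ × (Fin n → ℝ))) = (volume : Measure ℝ).prod volume from
      Measure.volume_eq_prod _ _, Measure.prod_apply hAm]
    have hfib : ∀ t : ℝ, volume (Prod.mk t ⁻¹' A)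
        = Set.indicator (Set.Icc 0 c)
            (fun t => ENNReal.ofReal ((c - t) ^ n / n.factorial)) t := by
      intro t
      by_cases ht : t ∈ Set.Icc (0:ℝ) c
      · have h : Prod.mk t ⁻¹' A = {y : Fin n → ℝ | (∀ i, 0 ≤ y i) ∧ ∑ i, y i ≤ c - t} := by
          ext y
          simp only [Set.mem_preimage, hA, Set.mem_setOf_eq]
          constructor
          · rintro ⟨⟨-, hy⟩, hsum⟩; exact ⟨hy, by linarith⟩
          · rintro ⟨hy, hsum⟩; exact ⟨⟨ht.1, hy⟩, by linarith⟩
        rw [h, ih _ (by linarith [ht.2]), Set.indicator_of_mem ht]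
      · rw [Set.indicator_of_notMem ht]
        have h : Prod.mk t ⁻¹' A = ∅ := by
          ext y
          simp only [Set.mem_preimage, hA, Set.mem_setOf_eq, Set.mem_empty_iff_false, iff_false]
          rintro ⟨⟨h0, hy⟩, hsum⟩
          have hsn : 0 ≤ ∑ i, y i := Finset.sum_nonneg fun i _ => hy i
          simp only [Set.mem_Icc, not_and_or, not_le] at ht
          rcases ht with ht | ht <;> linarith
        rw [h]; simp
    rw [lintegral_congr hfib, lintegral_indicator measurableSet_Icc]
    have hInt : IntegrableOn (fun t => (c - t) ^ n / (n.factorial : ℝ)) (Set.Icc 0 c) :=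
      Continuous.integrableOn_Icc (by continuity)
    have hnn : 0 ≤ᵐ[volume.restrict (Set.Icc 0 c)]
        fun t => (c - t) ^ n / (n.factorial : ℝ) := by
      refine (ae_restrict_iff' measurableSet_Icc).2 (Filter.Eventually.of_forall fun t ht => ?_)
      have h1 : 0 ≤ c - t := by linarith [ht.2]
      positivity
    rw [← MeasureTheory.ofReal_integral_eq_lintegral_ofReal hInt hnn]
    congr 1
    rw [MeasureTheory.integral_Icc_eq_integral_Ioc, ← intervalIntegral.integral_of_le hc,
      intervalIntegral.integral_div]
    rw [intervalIntegral.integral_comp_sub_left (fun x => x ^ n) c, sub_self, sub_zero,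
      integral_pow]
    rw [Nat.factorial_succ]
    have h1 : (n.factorial : ℝ) ≠ 0 := Nat.cast_ne_zero.2 n.factorial_ne_zero
    have h2 : ((n:ℝ) + 1) ≠ 0 := by positivity
    push_cast
    field_simp
    simp


lemma corner_hull (n : ℕ) :
    convexHull ℝ (insert (0 : Fin n → ℝ) (Set.range fun i => (Pi.single i 1 : Fin n → ℝ)))
      = {x : Fin n → ℝ | (∀ i, 0 ≤ x i) ∧ ∑ i, x i ≤ 1} := by
  apply Subset.antisymm
  · apply convexHull_min
    · rintro x (rfl | ⟨i, rfl⟩)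
      · exact ⟨fun i => le_refl 0, by simp⟩
      · refine ⟨fun j => ?_, ?_⟩
        · simp only [Pi.single_apply]
          split <;> norm_num
      
        · simp [Pi.single_apply]
    · have h1 : Convex ℝ {x : Fin n → ℝ | ∀ i, 0 ≤ x i} := by
        have h : {x : Fin n → ℝ | ∀ i, 0 ≤ x i} = ⋂ i, {x : Fin n → ℝ | 0 ≤ x i} := by
          ext x; simp
        rw [h]
        exact convex_iInter fun i =>
          convex_halfSpace_ge ⟨fun a b => rfl, fun c a => rfl⟩ 0
      have h2 : Convex ℝ {x : Fin n → ℝ | ∑ i, x i ≤ 1} :=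
        convex_halfSpace_le ⟨fun a b => Finset.sum_add_distrib,
          fun c a => by simp [Finset.mul_sum]⟩ 1
      exact h1.inter h2
  · rintro x ⟨hx0, hx1⟩
    by_cases hs : ∑ i, x i = 0
    · have hx : x = 0 := funext fun i => le_antisymm
        (le_of_eq ((Finset.sum_eq_zero_iff_of_nonneg fun j _ => hx0 j).1 hs i
          (Finset.mem_univ i))) (hx0 i)
      exact hx ▸ subset_convexHull ℝ _ (Set.mem_insert _ _)
    · set s := ∑ i, x i with hsdef
      have hspos : 0 < s := lt_of_le_of_ne (Finset.sum_nonneg fun i _ => hx0 i) (Ne.symm hs)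
      set y := s⁻¹ • x with hy
      have hysimplex : y ∈ stdSimplex ℝ (Fin n) := by
        refine ⟨fun i => mul_nonneg (inv_nonneg.2 hspos.le) (hx0 i), ?_⟩
        simp only [hy, Pi.smul_apply, smul_eq_mul, ← Finset.mul_sum]
        exact inv_mul_cancel₀ hs
      have hfn : (fun i => (Pi.single i 1 : Fin n → ℝ))
          = fun (i j : Fin n) => @ite ℝ (i = j) (Classical.propDecidable _) (1:ℝ) 0 := by
        funext i j
        rcases eq_or_ne j i with h | h
        · subst h; simp
        · simp [Pi.single_apply, h, Ne.symm h]
      have hrange := congrArg Set.range hfn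
      have hy' : y ∈ convexHull ℝ (Set.range fun i => (Pi.single i 1 : Fin n → ℝ)) := by
        rw [hrange]
        convert hysimplex using 1
        convert convexHull_basis_eq_stdSimplex (R := ℝ) (ι := Fin n)
      have hy'' : y ∈ convexHull ℝ
          (insert (0 : Fin n → ℝ) (Set.range fun i => (Pi.single i 1 : Fin n → ℝ))) :=
        convexHull_mono (Set.subset_insert _ _) hy'
      have h0 : (0 : Fin n → ℝ) ∈ convexHull ℝ
          (insert (0 : Fin n → ℝ) (Set.range fun i => (Pi.single i 1 : Fin n → ℝ))) :=
        subset_convexHull ℝ _ (Set.mem_insert _ _)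
      have hxeq : x = (1 - s) • (0 : Fin n → ℝ) + s • y := by
        simp [hy, smul_smul, mul_inv_cancel₀ hs]
      rw [hxeq]
      exact (convex_convexHull ℝ _) h0 hy'' (by linarith) hspos.le (by ring)

/-- For every `ℓ ≥ 1`, the simplex `S = conv{0, ℓ·e₁, e₂, …, e_m}` in `ℝ^m` satisfies
`|S ∩ ℤ^m| = ℓ + m` and `m! · vol(S) = ℓ`; in particular Blichfeldt's bound
`|S ∩ ℤ^m| ≤ m! · vol(S) + m` is attained with equality. -/
theorem blichfeldt_sharp (m : ℕ) (hm : 1 ≤ m) (ℓ : ℕ) (hℓ : 1 ≤ ℓ)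
    (S : Set (Fin m → ℝ))
    (hS : S = convexHull ℝ
      (insert (0 : Fin m → ℝ)
        (insert ((ℓ : ℝ) • (Pi.single (⟨0, hm⟩ : Fin m) (1 : ℝ) : Fin m → ℝ))
          {x : Fin m → ℝ | ∃ i : Fin m, i ≠ ⟨0, hm⟩ ∧ x = Pi.single i 1})))
    (Z : Set (Fin m → ℝ)) (hZ : Z = {x : Fin m → ℝ | ∀ i, ∃ z : ℤ, x i = (z : ℝ)}) :
    Nat.card ↥(S ∩ Z) = ℓ + m ∧
      (m.factorial : ℝ≥0∞) * volume S = (ℓ : ℝ≥0∞) ∧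
      (Nat.card ↥(S ∩ Z) : ℝ) = (m.factorial : ℝ) * (volume S).toReal + m := by
  have hℓpos : (0:ℝ) < ℓ := by
    have : 0 < ℓ := hℓ
    exact_mod_cast this
  set i0 : Fin m := ⟨0, hm⟩ with hi0
  set d : Fin m → ℝ := fun i => if i = i0 then (ℓ:ℝ) else 1 with hd
  have hdpos : ∀ i, 0 < d i := by
    intro i
    by_cases h : i = i0 <;> simp [hd, h, hℓpos]
  set f : (Fin m → ℝ) →ₗ[ℝ] (Fin m → ℝ) := Matrix.toLin' (Matrix.diagonal d) with hf
  have hfapp : ∀ (x : Fin m → ℝ) (i : Fin m), f x i = d i * x i := by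
    intro x i
    simp [hf, Matrix.toLin'_apply, Matrix.mulVec_diagonal]
  set g : (Fin m → ℝ) → (Fin m → ℝ) := fun x i => (d i)⁻¹ * x i with hg
  have hfg : ∀ x, f (g x) = x := by
    intro x
    funext i
    rw [hfapp]
    simp only [hg]
    field_simp [(hdpos i).ne']
  -- the vertex set is the image of the corner vertices under f
  have hfe : ∀ i : Fin m, f (Pi.single i 1) = Pi.single i (d i) := by
    intro i
    funext j
    rw [hfapp, Pi.single_apply, Pi.single_apply]
    by_cases h : j = i <;> simp [h]
  have hfe0 : f (Pi.single i0 1) = (ℓ:ℝ) • (Pi.single i0 (1:ℝ) : Fin m → ℝ) := by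
    rw [hfe]
    funext j
    simp only [Pi.smul_apply, smul_eq_mul, Pi.single_apply, hd]
    by_cases h : j = i0 <;> simp [h]
  have hfe1 : ∀ i : Fin m, i ≠ i0 → f (Pi.single i 1) = Pi.single i 1 := by
    intro i hi
    rw [hfe]
    simp [hd, hi]
  have himg : f '' (insert (0 : Fin m → ℝ) (Set.range fun i => (Pi.single i 1 : Fin m → ℝ)))
      = insert (0 : Fin m → ℝ)
        (insert ((ℓ : ℝ) • (Pi.single i0 (1 : ℝ) : Fin m → ℝ))
          {x : Fin m → ℝ | ∃ i : Fin m, i ≠ i0 ∧ x = Pi.single i 1}) := by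
    apply Subset.antisymm
    · rintro x ⟨y, hy, rfl⟩
      rcases hy with rfl | ⟨i, rfl⟩
      · left
        exact map_zero f
      · by_cases h : i = i0
        · subst h
          right; left
          exact hfe0
        · right; right
          refine ⟨i, h, ?_⟩
          exact hfe1 i h
    · rintro x (rfl | rfl | ⟨i, hi, rfl⟩)
      · exact ⟨0, Set.mem_insert _ _, map_zero f⟩
      · exact ⟨Pi.single i0 1, Set.mem_insert_of_mem _ ⟨i0, rfl⟩, hfe0⟩
      · exact ⟨Pi.single i 1, Set.mem_insert_of_mem _ ⟨i, rfl⟩, hfe1 i hi⟩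
  have hSeq : S = f '' {x : Fin m → ℝ | (∀ i, 0 ≤ x i) ∧ ∑ i, x i ≤ 1} := by
    rw [hS, ← himg, ← LinearMap.image_convexHull, corner_hull m]
  -- halfspace description of S
  have hmem : ∀ x : Fin m → ℝ, x ∈ S ↔
      ((∀ i, 0 ≤ x i) ∧ x i0 / ℓ + ∑ i ∈ Finset.univ.erase i0, x i ≤ 1) := by
    intro x
    rw [hSeq]
    constructor
    · rintro ⟨y, ⟨hy0, hy1⟩, rfl⟩
      refine ⟨fun i => by rw [hfapp]; exact mul_nonneg (hdpos i).le (hy0 i), ?_⟩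
      have h1 : f y i0 / ℓ = y i0 := by
        rw [hfapp, show d i0 = (ℓ:ℝ) by simp [hd]]
        exact mul_div_cancel_left₀ _ hℓpos.ne'
      have h2 : ∑ i ∈ Finset.univ.erase i0, f y i = ∑ i ∈ Finset.univ.erase i0, y i :=
        Finset.sum_congr rfl fun i hi => by
          rw [hfapp]
          simp [hd, (Finset.mem_erase.1 hi).1]
      rw [h1, h2, Finset.add_sum_erase _ _ (Finset.mem_univ i0)]
      exact hy1
    · rintro ⟨h0, h1⟩
      refine ⟨g x, ⟨fun i => mul_nonneg (inv_nonneg.2 (hdpos i).le) (h0 i), ?_⟩, hfg x⟩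
      rw [← Finset.add_sum_erase _ _ (Finset.mem_univ i0)]
      have e1 : g x i0 = x i0 / ℓ := by
        simp [hg, hd, inv_mul_eq_div]
      have e2 : ∑ i ∈ Finset.univ.erase i0, g x i = ∑ i ∈ Finset.univ.erase i0, x i :=
        Finset.sum_congr rfl fun i hi => by
          simp [hg, hd, (Finset.mem_erase.1 hi).1]
      rw [e1, e2]
      exact h1
  -- volume
  have hdet : LinearMap.det f = (ℓ:ℝ) := by
    rw [hf, LinearMap.det_toLin', Matrix.det_diagonal]
    simp [hd]
  have hvol : volume S = ENNReal.ofReal ((ℓ:ℝ) / m.factorial) := by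
    rw [hSeq, Measure.addHaar_image_linearMap, volume_cornerSimplex m 1 zero_le_one, hdet,
      abs_of_nonneg hℓpos.le, ← ENNReal.ofReal_mul hℓpos.le]
    congr 1
    rw [one_pow, mul_one_div]
  have hfacne : (m.factorial : ℝ) ≠ 0 := Nat.cast_ne_zero.2 m.factorial_ne_zero
  have hvol2 : (m.factorial : ℝ≥0∞) * volume S = (ℓ : ℝ≥0∞) := by
    rw [hvol, show ((m.factorial : ℕ) : ℝ≥0∞) = ENNReal.ofReal (m.factorial : ℝ) from
      (ENNReal.ofReal_natCast _).symm, ← ENNReal.ofReal_mul (by positivity)]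
    rw [show (m.factorial : ℝ) * ((ℓ:ℝ) / m.factorial) = (ℓ:ℝ) by field_simp]
    exact ENNReal.ofReal_natCast ℓ
  -- the lattice points
  classical
  set F : Finset (Fin m → ℝ) :=
    ((Finset.range (ℓ+1)).image fun k : ℕ => (k:ℝ) • (Pi.single i0 1 : Fin m → ℝ)) ∪
    ((Finset.univ.erase i0).image fun i : Fin m => (Pi.single i 1 : Fin m → ℝ)) with hF
  have hdisj : Disjoint
      ((Finset.range (ℓ+1)).image fun k : ℕ => (k:ℝ) • (Pi.single i0 1 : Fin m → ℝ))
      ((Finset.univ.erase i0).image fun i : Fin m => (Pi.single i 1 : Fin m → ℝ)) := by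
    rw [Finset.disjoint_left]
    rintro x hx1 hx2
    obtain ⟨k, -, rfl⟩ := Finset.mem_image.1 hx1
    obtain ⟨i, hi, hxi⟩ := Finset.mem_image.1 hx2
    have hine : i ≠ i0 := (Finset.mem_erase.1 hi).1
    have := congrFun hxi i
    simp [Pi.single_eq_same, Pi.single_eq_of_ne hine] at this
  have hcard : F.card = ℓ + m := by
    rw [hF, Finset.card_union_of_disjoint hdisj,
      Finset.card_image_of_injective _ (fun a b hab => by
        have := congrFun hab i0
        simp [Pi.single_eq_same] at this
        exact_mod_cast this),
      Finset.card_image_of_injective _ (fun a b hab => by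
        by_contra hne
        have := congrFun hab a
        simp [Pi.single_eq_same, Pi.single_apply, hne] at this),
      Finset.card_range, Finset.card_erase_of_mem (Finset.mem_univ i0), Finset.card_univ,
      Fintype.card_fin]
    omega
  have hSZ : S ∩ Z = ↑F := by
    ext x
    constructor
    · rintro ⟨hxS, hxZ⟩
      rw [hZ] at hxZ
      choose z hz using hxZ
      obtain ⟨h0, h1⟩ := (hmem x).1 hxS
      have hz0 : ∀ i, 0 ≤ z i := by
        intro i
        have := h0 i
        rw [hz i] at this
        exact_mod_cast this
      set N : ℤ := ∑ i ∈ Finset.univ.erase i0, z i with hN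
      have hNreal : ((N:ℝ)) = ∑ i ∈ Finset.univ.erase i0, x i := by
        rw [hN]
        push_cast
        exact Finset.sum_congr rfl fun i _ => (hz i).symm
      have hN0 : 0 ≤ N := Finset.sum_nonneg fun i _ => hz0 i
      have hdiv0 : 0 ≤ x i0 / ℓ := div_nonneg (h0 i0) hℓpos.le
      have hN1 : N ≤ 1 := by
        by_contra h
        push_neg at h
        have h2 : (2:ℝ) ≤ (N:ℝ) := by exact_mod_cast h
        rw [hNreal] at h2
        linarith
      simp only [Finset.coe_union, Set.mem_union, Finset.coe_image, Set.mem_image,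
        Finset.mem_coe, Finset.mem_range, Finset.mem_erase, Finset.mem_univ, and_true, hF]
      rcases (by omega : N = 0 ∨ N = 1) with hNeq | hNeq
      · -- multiple of e_{i0}
        have hall : ∀ i ∈ Finset.univ.erase i0, z i = 0 :=
          (Finset.sum_eq_zero_iff_of_nonneg fun i _ => hz0 i).1 (hN ▸ hNeq)
        have hxi : ∀ i : Fin m, i ≠ i0 → x i = 0 := by
          intro i hi
          rw [hz i, hall i (Finset.mem_erase.2 ⟨hi, Finset.mem_univ i⟩)]
          norm_num
        have hsum0 : ∑ i ∈ Finset.univ.erase i0, x i = 0 :=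
          Finset.sum_eq_zero fun i hi => hxi i (Finset.mem_erase.1 hi).1
        rw [hsum0, add_zero] at h1
        have hxle : x i0 ≤ ℓ := (div_le_one hℓpos).1 h1
        have hzle : z i0 ≤ (ℓ:ℤ) := by
          have : (z i0 : ℝ) ≤ (ℓ:ℝ) := by rw [← hz i0]; exact hxle
          exact_mod_cast this
        refine Or.inl ⟨(z i0).toNat, by omega, ?_⟩
        funext j
        by_cases hj : j = i0
        · subst hj
          simp only [Pi.smul_apply, Pi.single_eq_same, smul_eq_mul, mul_one]
          rw [hz i0]
          have h5 : ((z i0).toNat : ℤ) = z i0 := Int.toNat_of_nonneg (hz0 i0)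
          exact_mod_cast congrArg (Int.cast : ℤ → ℝ) h5
        · simp only [Pi.smul_apply, Pi.single_eq_of_ne hj, smul_eq_mul, mul_zero]
          exact (hxi j hj).symm
      · -- a unit vector
        have hxi0 : x i0 = 0 := by
          have hsum1 : ∑ i ∈ Finset.univ.erase i0, x i = 1 := by
            rw [← hNreal, hNeq]
            norm_num
          have hle : x i0 / ℓ ≤ 0 := by linarith
          have h6 := (div_le_iff₀ hℓpos).1 hle
          rw [zero_mul] at h6
          exact le_antisymm h6 (h0 i0)
        have hex : ∃ j ∈ Finset.univ.erase i0, 1 ≤ z j := by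
          by_contra h
          push_neg at h
          have : N = 0 := Finset.sum_eq_zero fun i hi => by
            have := h i hi
            have := hz0 i
            omega
          omega
        obtain ⟨j, hjmem, hj1⟩ := hex
        have hjne : j ≠ i0 := (Finset.mem_erase.1 hjmem).1
        have hsplit : z j + ∑ i ∈ (Finset.univ.erase i0).erase j, z i = N :=
          Finset.add_sum_erase _ _ hjmem
        have hM0 : 0 ≤ ∑ i ∈ (Finset.univ.erase i0).erase j, z i :=
          Finset.sum_nonneg fun i _ => hz0 i
        have hzj : z j = 1 := by omega
        have hrest : ∀ i ∈ (Finset.univ.erase i0).erase j, z i = 0 :=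
          (Finset.sum_eq_zero_iff_of_nonneg fun i _ => hz0 i).1 (by omega)
        refine Or.inr ⟨j, hjne, ?_⟩
        funext i
        by_cases hij : i = j
        · subst hij
          rw [Pi.single_eq_same, hz i, hzj]
          norm_num
        · rw [Pi.single_eq_of_ne hij]
          by_cases hii0 : i = i0
          · subst hii0; exact hxi0.symm
          · rw [hz i, hrest i (Finset.mem_erase.2 ⟨hij,
              Finset.mem_erase.2 ⟨hii0, Finset.mem_univ i⟩⟩)]
            norm_num
    · intro hx
      simp only [Finset.coe_union, Set.mem_union, Finset.coe_image, Set.mem_image,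
        Finset.mem_coe, Finset.mem_range, Finset.mem_erase, Finset.mem_univ, and_true, hF] at hx
      rcases hx with ⟨k, hk, rfl⟩ | ⟨i, hi, rfl⟩
      · constructor
        · rw [hmem]
          constructor
          · intro i
            simp only [Pi.smul_apply, smul_eq_mul]
            rw [Pi.single_apply]
            by_cases h : i = i0 <;> simp [h]
          · have hsum0 : ∑ i ∈ Finset.univ.erase i0, ((k:ℝ) • (Pi.single i0 1 : Fin m → ℝ)) i = 0 :=
              Finset.sum_eq_zero fun i hi => by
                simp [Pi.single_eq_of_ne (Finset.mem_erase.1 hi).1]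
            rw [hsum0, add_zero]
            simp only [Pi.smul_apply, Pi.single_eq_same, smul_eq_mul, mul_one]
            rw [div_le_one hℓpos]
            exact_mod_cast Nat.lt_succ_iff.1 hk
        · rw [hZ]
          intro i
          by_cases h : i = i0
          · subst h
            exact ⟨(k:ℤ), by simp⟩
          · exact ⟨0, by simp [Pi.single_eq_of_ne h]⟩
      · constructor
        · rw [hmem]
          refine ⟨fun j => by rw [Pi.single_apply]; by_cases h : j = i <;> simp [h], ?_⟩
          rw [Pi.single_eq_of_ne (Ne.symm hi), zero_div, zero_add]
          have : ∑ j ∈ Finset.univ.erase i0, (Pi.single i 1 : Fin m → ℝ) j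
              = ∑ j ∈ Finset.univ.erase i0, (if j = i then (1:ℝ) else 0) :=
            Finset.sum_congr rfl fun j _ => Pi.single_apply i 1 j
          rw [this, Finset.sum_ite_eq' _ i fun _ => (1:ℝ)]
          simp [Finset.mem_erase, hi]
        · rw [hZ]
          intro j
          by_cases h : j = i
          · subst h; exact ⟨1, by simp⟩
          · exact ⟨0, by simp [Pi.single_eq_of_ne h]⟩
  have hcount : Nat.card ↥(S ∩ Z) = ℓ + m := by
    rw [hSZ, Nat.card_coe_set_eq, Set.ncard_coe_finset, hcard]
  refine ⟨hcount, hvol2, ?_⟩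
  rw [hcount, hvol, ENNReal.toReal_ofReal (by positivity)]
  push_cast
  field_simp
end

section
/- Let K = ℚ(√2), with canonical embedding ρ∘ι : K → ℝ² given by x ↦ (σ₁(x), σ₂(x)) for the two real embeddings. Then no 2-dimensional axis-parallel box [−a, a] × [−b, b] (a, b > 0) has all four of its vertices in the lattice ρ(ι(O)), where O = ℤ[√2]. -/
/-- For `K = ℚ(√2)` with ring of integers `ℤ[√2]`, embedded in `ℝ²` via the two real
embeddings (so the image lattice is generated by `(1,1)` and `(√2, −√2)`), no axis-parallel
box `[−a,a] × [−b,b]` with `a, b > 0` has all four of its vertices `(±a, ±b)` in the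
lattice. -/
theorem no_box_with_lattice_vertices (a b : ℝ) (ha : 0 < a) (hb : 0 < b)
    (L : Submodule ℤ (ℝ × ℝ))
    (hL : L = Submodule.span ℤ
      ({((1 : ℝ), (1 : ℝ)), (Real.sqrt 2, -Real.sqrt 2)} : Set (ℝ × ℝ))) :
    ¬ ((a, b) ∈ L ∧ (a, -b) ∈ L ∧ (-a, b) ∈ L ∧ (-a, -b) ∈ L) := by
  rintro ⟨h1, h2, -, -⟩
  subst hL
  rw [Submodule.mem_span_pair] at h1 h2
  obtain ⟨m, n, hmn⟩ := h1
  obtain ⟨p, q, hpq⟩ := h2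
  have e1 : (m : ℝ) + n * Real.sqrt 2 = a := by
    have := congrArg Prod.fst hmn; simpa [Prod.smul_def] using this
  have e2 : (m : ℝ) - n * Real.sqrt 2 = b := by
    have := congrArg Prod.snd hmn
    simpa [Prod.smul_def, sub_eq_add_neg] using this
  have e3 : (p : ℝ) + q * Real.sqrt 2 = a := by
    have := congrArg Prod.fst hpq; simpa [Prod.smul_def] using this
  have e4 : (p : ℝ) - q * Real.sqrt 2 = -b := by
    have := congrArg Prod.snd hpq
    simpa [Prod.smul_def, sub_eq_add_neg] using this
  -- (m+p) - (n+q)√2 = 0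
  have key : ((m + p : ℤ) : ℝ) = ((n + q : ℤ) : ℝ) * Real.sqrt 2 := by
    push_cast; nlinarith [e2, e4]
  have hN : n + q = 0 := by
    by_contra hN
    refine irrational_sqrt_two ⟨((m + p : ℤ) : ℚ) / ((n + q : ℤ) : ℚ), ?_⟩
    have hne : ((n + q : ℤ) : ℝ) ≠ 0 := Int.cast_ne_zero.mpr hN
    push_cast at hne key ⊢
    rw [div_eq_iff hne]
    linarith [key]
  have hM : ((m + p : ℤ) : ℝ) = 0 := by rw [key, hN]; simp
  -- but (m+p) + (n+q)√2 = 2a > 0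
  have : (2 : ℝ) * a = 0 := by
    have hN' : ((n + q : ℤ) : ℝ) = 0 := by rw [hN]; simp
    push_cast at hM hN'
    nlinarith [e1, e3]
  linarith
end
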